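/- Assume both causality axioms for T and T'_l on subsets of {1,…,n}. Let P ⊔ Q = {1,…,n−1} be a partition with P ≠ ∅ and write Qn := Q ∪ {n}. If x(Qn) ≥ x(P) then A′_{n,l} = −[T'_l(Qn)·T(P) + T(Qn)·T'_l(P)] for every l, and if x(P) ≥ x(Qn) then R′_{n,l} = −[T'_l(P)·T(Qn) + T(P)·T'_l(Qn)] for every l. -/

import Mathlib

/-- The Minkowski quadratic form on `ℝ⁴`. -/
def minkQ (x : Fin 4 → ℝ) : ℝ := x 0 ^ 2 - x 1 ^ 2 - x 2 ^ 2 - x 3 ^ 2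

/-- The open backward light cone `V⁻`. -/
def Vminus : Set (Fin 4 → ℝ) := {x | 0 < minkQ x ∧ x 0 < 0}

/-- Sum over all ordered partitions of `X` into `r ≥ 1` nonempty pairwise disjoint blocks
`X₁, …, X_r` of `(-1)^r * T X₁ * ⋯ * T X_r` (with value `1` for `X = ∅`), computed by peeling
off the first block. -/
def opSum {A : Type*} [Ring A] {ι : Type*} [DecidableEq ι]
    (T : Finset ι → A) (X : Finset ι) : A :=
  if _hX : X = ∅ then 1
  else
    ∑ Y ∈ (X.powerset.filter (fun Y => Y ≠ ∅)).attach,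
      (-1 : A) * T Y.1 * opSum T (X \ Y.1)
termination_by X.card
decreasing_by
  have hY := Y.2
  simp only [Finset.mem_filter, Finset.mem_powerset] at hY
  have h1 : Y.1.card ≤ X.card := Finset.card_le_card hY.1
  have h2 : 0 < Y.1.card := Finset.card_pos.mpr (Finset.nonempty_iff_ne_empty.mpr hY.2)
  rw [Finset.card_sdiff, Finset.inter_eq_left.mpr hY.1]
  omega

/-- The antichronological products `T̄`, defined by `T̄(∅) = 1` and
`(−1)^{|X|} T̄(X) = Σ_{r=1}^{|X|} (−1)^r Σ T(X₁)⋯T(X_r)`, the inner sum running over all ordered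
partitions of `X` into `r` nonempty pairwise disjoint subsets. -/
def chronoBar {A : Type*} [Ring A] {ι : Type*} [DecidableEq ι]
    (T : Finset ι → A) (X : Finset ι) : A :=
  (-1 : A) ^ X.card * opSum T X

/-- Sum over all ordered partitions of `X` into `r ≥ 1` nonempty pairwise disjoint blocks of
`(-1)^r * T X₁ ⋯ T' X_k ⋯ T X_r`, with `T'` replacing `T` in exactly one block (value `0` for
`X = ∅`), computed by peeling off the first block. -/
def opSumD {A : Type*} [Ring A] {ι : Type*} [DecidableEq ι]
    (T T' : Finset ι → A) (X : Finset ι) : A :=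
  if _hX : X = ∅ then 0
  else
    ∑ Y ∈ (X.powerset.filter (fun Y => Y ≠ ∅)).attach,
      (-1 : A) * (T' Y.1 * opSum T (X \ Y.1) + T Y.1 * opSumD T T' (X \ Y.1))
termination_by X.card
decreasing_by
  have hY := Y.2
  simp only [Finset.mem_filter, Finset.mem_powerset] at hY
  have h1 : Y.1.card ≤ X.card := Finset.card_le_card hY.1
  have h2 : 0 < Y.1.card := Finset.card_pos.mpr (Finset.nonempty_iff_ne_empty.mpr hY.2)
  rw [Finset.card_sdiff, Finset.inter_eq_left.mpr hY.1]
  omega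

/-- The barred family `T̄'`, defined by `T̄'(∅) = 0` and
`(−1)^{|X|} T̄'(X) = Σ_{r=1}^{|X|} (−1)^r Σ Σ_{k=1}^{r} T(X₁)⋯T'(X_k)⋯T(X_r)`, the inner sum over
ordered partitions of `X` into `r` nonempty pairwise disjoint blocks, with `T'` replacing `T`
in exactly one block. -/
def chronoBarD {A : Type*} [Ring A] {ι : Type*} [DecidableEq ι]
    (T T' : Finset ι → A) (X : Finset ι) : A :=
  (-1 : A) ^ X.card * opSumD T T' X

/-- The advanced sum `A′_{n,l} := Σ (−1)^{|Y|} [T'_l(X)·T̄(Y) + T(X)·T̄'_l(Y)]`, over all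
partitions `X ⊔ Y = {1,…,n}` with `n ∈ X` (here `lst` plays the role of `n`) and `Y ≠ ∅`. -/
def advPD {A : Type*} [Ring A] {ι : Type*} [Fintype ι] [DecidableEq ι]
    (T T' : Finset ι → A) (lst : ι) : A :=
  ∑ Y ∈ (Finset.univ.erase lst).powerset.filter (fun Y => Y ≠ ∅),
    (-1 : A) ^ Y.card * (T' Yᶜ * chronoBar T Y + T Yᶜ * chronoBarD T T' Y)

/-- The retarded sum `R′_{n,l} := Σ (−1)^{|Y|} [T̄'_l(Y)·T(X) + T̄(Y)·T'_l(X)]`, over all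
partitions `X ⊔ Y = {1,…,n}` with `n ∈ X` (here `lst` plays the role of `n`) and `Y ≠ ∅`. -/
def retPD {A : Type*} [Ring A] {ι : Type*} [Fintype ι] [DecidableEq ι]
    (T T' : Finset ι → A) (lst : ι) : A :=
  ∑ Y ∈ (Finset.univ.erase lst).powerset.filter (fun Y => Y ≠ ∅),
    (-1 : A) ^ Y.card * (chronoBarD T T' Y * T Yᶜ + chronoBar T Y * T' Yᶜ)


/-!
Under subset convolution `(f * g) X = ∑_{Z ⊆ X} f Z * g (X \ Z)` the recursion defining `opSum T`
says that it is the inverse of `T`, and restricting set functions to the subsets of a fixed set is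
multiplicative. Causality `x(Qn) ≥ x(P)` reads `T = T|_Qn * T|_P`, so the inverse `S = opSum T`
restricts to `S|_(P ∪ Q) = S|_P * S|_Q` and `T * S|_(P ∪ Q) = T|_Qn * S|_Q`, which vanishes on the
full set because `P ≠ ∅`. At the full set this says `∑_{Y ≠ ∅} T(Yᶜ) S(Y) = -T(Qn) T(P)`, and the
signs `(-1)^|Y|` of `T̄ = (-1)^|Y| S` cancel. The primed identity is the `ε`-component of the
same identity for the dual-number family `T + ε T'`, whose causality is that of `T` and `T'`
together. The retarded case is the mirror image.
-/

open Finset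

lemma Finset.sum_powerset_sum_powerset {ι M : Type*} [DecidableEq ι] [AddCommMonoid M]
    (X : Finset ι) (F : Finset ι → Finset ι → M) :
    ∑ Z ∈ X.powerset, ∑ W ∈ Z.powerset, F W Z =
      ∑ W ∈ X.powerset, ∑ V ∈ (X \ W).powerset, F W (W ∪ V) := by
  rw [sum_comm' (t' := X.powerset) (s' := fun W => Icc W X)]
  · refine sum_congr rfl fun W hW => ?_
    rw [Icc_eq_image_powerset (mem_powerset.mp hW), sum_image]
    intro V₁ hV₁ V₂ hV₂ h
    simp only [coe_powerset, Set.mem_preimage, Set.mem_powerset_iff, coe_subset] at hV₁ hV₂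
    simpa only [union_sdiff_cancel_left (disjoint_of_subset_right hV₁ disjoint_sdiff),
      union_sdiff_cancel_left (disjoint_of_subset_right hV₂ disjoint_sdiff)]
      using congrArg (· \ W) h
  · intro Z W
    simp only [mem_powerset, mem_Icc]
    exact ⟨fun h => ⟨⟨h.2, h.1⟩, h.2.trans h.1⟩, fun h => ⟨h.1.2, h.1.1⟩⟩

section OpSum

variable {ι A : Type*} [DecidableEq ι] [Ring A]

lemma opSum_empty (T : Finset ι → A) : opSum T ∅ = 1 := by
  rw [opSum, dif_pos rfl]

lemma opSum_of_ne_empty (T : Finset ι → A) {X : Finset ι} (hX : X ≠ ∅) :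
    opSum T X = -∑ Y ∈ X.powerset.filter (· ≠ ∅), T Y * opSum T (X \ Y) := by
  rw [opSum, dif_neg hX, sum_attach _ fun Y => -1 * T Y * opSum T (X \ Y)]
  simp only [neg_mul, one_mul, sum_neg_distrib]

lemma opSumD_empty (T T' : Finset ι → A) : opSumD T T' ∅ = 0 := by
  rw [opSumD, dif_pos rfl]

lemma opSumD_of_ne_empty (T T' : Finset ι → A) {X : Finset ι} (hX : X ≠ ∅) :
    opSumD T T' X =
      -∑ Y ∈ X.powerset.filter (· ≠ ∅), (T' Y * opSum T (X \ Y) + T Y * opSumD T T' (X \ Y)) := by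
  rw [opSumD, dif_neg hX,
    sum_attach _ fun Y => -1 * (T' Y * opSum T (X \ Y) + T Y * opSumD T T' (X \ Y))]
  simp only [neg_mul, one_mul, sum_neg_distrib]

end OpSum

/-- Coefficient families of elements of `B[x_i : i ∈ ι] / (x_i ^ 2)`, the `x_i` commuting with `B`
and each other; their product is subset convolution. -/
def SetFun (ι B : Type*) := Finset ι → B

namespace SetFun

/-- Without passing through `of`, `T * S` for `T S : Finset ι → B` is the pointwise product. -/
def of {ι B : Type*} (f : Finset ι → B) : SetFun ι B := f

@[simp] lemma of_apply {ι B : Type*} (f : Finset ι → B) (X : Finset ι) : of f X = f X := rfl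

variable {ι B : Type*} [DecidableEq ι]

section Semiring

variable [Semiring B]

instance : Monoid (SetFun ι B) where
  mul f g X := ∑ Z ∈ X.powerset, f Z * g (X \ Z)
  one X := if X = ∅ then 1 else 0
  mul_assoc f g h := by
    funext X
    show ∑ Z ∈ X.powerset, (∑ W ∈ Z.powerset, f W * g (Z \ W)) * h (X \ Z) =
      ∑ W ∈ X.powerset, f W * ∑ V ∈ (X \ W).powerset, g V * h ((X \ W) \ V)
    simp_rw [sum_mul, mul_sum]
    rw [sum_powerset_sum_powerset]
    refine sum_congr rfl fun W _ => sum_congr rfl fun V hV => ?_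
    rw [union_sdiff_cancel_left (disjoint_of_subset_right (mem_powerset.mp hV) disjoint_sdiff),
      sdiff_union_distrib, Finset.sdiff_sdiff_left', mul_assoc]
  one_mul f := by
    funext X
    show ∑ Z ∈ X.powerset, (if Z = ∅ then 1 else 0) * f (X \ Z) = f X
    simp [ite_mul]
  mul_one f := by
    funext X
    show ∑ Z ∈ X.powerset, f Z * (if X \ Z = ∅ then 1 else 0) = f X
    rw [sum_eq_single_of_mem X (mem_powerset_self X)]
    · simp
    · intro Z hZ hne
      have hXZ : X \ Z ≠ ∅ := fun h =>
        hne (subset_antisymm (mem_powerset.mp hZ) (sdiff_eq_empty_iff_subset.mp h))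
      rw [if_neg hXZ, mul_zero]

lemma mul_apply (f g : SetFun ι B) (X : Finset ι) :
    (f * g) X = ∑ Z ∈ X.powerset, f Z * g (X \ Z) := rfl

lemma one_apply (X : Finset ι) : (1 : SetFun ι B) X = if X = ∅ then 1 else 0 := rfl

def restrict (V : Finset ι) : SetFun ι B →* SetFun ι B where
  toFun f X := if X ⊆ V then f X else 0
  map_one' := by
    funext X
    show (if X ⊆ V then (if X = ∅ then 1 else 0) else 0) = (if X = ∅ then (1 : B) else 0)
    split_ifs <;> simp_all
  map_mul' f g := by
    funext X
    show (if X ⊆ V then ∑ Z ∈ X.powerset, f Z * g (X \ Z) else 0) =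
      ∑ Z ∈ X.powerset, (if Z ⊆ V then f Z else 0) * (if X \ Z ⊆ V then g (X \ Z) else 0)
    split_ifs with hX
    · refine sum_congr rfl fun Z hZ => ?_
      rw [if_pos ((mem_powerset.mp hZ).trans hX), if_pos (sdiff_subset.trans hX)]
    · refine (sum_eq_zero fun Z hZX => ?_).symm
      split_ifs with hZ hXZ <;> try simp only [zero_mul, mul_zero]
      exact absurd (sdiff_union_of_subset (mem_powerset.mp hZX) ▸ union_subset hXZ hZ) hX

lemma restrict_apply (V : Finset ι) (f : SetFun ι B) (X : Finset ι) :
    restrict V f X = if X ⊆ V then f X else 0 := rfl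

lemma restrict_univ [Fintype ι] (f : SetFun ι B) : restrict univ f = f := by
  funext X
  simp [restrict_apply]

lemma restrict_mul_restrict_apply_of_not_subset {V W X : Finset ι} (f g : SetFun ι B)
    (hX : ¬X ⊆ V ∪ W) : (restrict V f * restrict W g) X = 0 := by
  refine sum_eq_zero fun Z hZ => ?_
  simp only [restrict_apply]
  split_ifs with hZV hXZ <;> try simp only [zero_mul, mul_zero]
  exact absurd (sdiff_union_of_subset (mem_powerset.mp hZ) ▸
    union_subset (hXZ.trans subset_union_right) (hZV.trans subset_union_left)) hX

lemma restrict_union_eq_mul {V W : Finset ι} (hd : Disjoint V W) (f : SetFun ι B)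
    (hf : ∀ Za ⊆ V, ∀ Zb ⊆ W, f (Za ∪ Zb) = f Za * f Zb) :
    restrict (V ∪ W) f = restrict V f * restrict W f := by
  funext X
  by_cases hX : X ⊆ V ∪ W
  swap
  · rw [restrict_apply, if_neg hX, restrict_mul_restrict_apply_of_not_subset _ _ hX]
  have hXW : X \ (X ∩ V) ⊆ W := fun x hx => by
    simp only [mem_sdiff, mem_inter, not_and] at hx
    exact (mem_union.mp (hX hx.1)).resolve_left (hx.2 hx.1)
  rw [restrict_apply, if_pos hX, mul_apply,
    sum_eq_single_of_mem (X ∩ V) (mem_powerset.mpr inter_subset_left)]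
  · rw [restrict_apply, restrict_apply, if_pos inter_subset_right, if_pos hXW,
      ← hf _ inter_subset_right _ hXW, union_sdiff_of_subset inter_subset_left]
  · intro Z hZX hne
    rw [restrict_apply, restrict_apply]
    split_ifs with hZV hXZ <;> try simp only [zero_mul, mul_zero]
    refine absurd (subset_antisymm (subset_inter (mem_powerset.mp hZX) hZV) fun x hx => ?_) hne
    by_contra hxZ
    exact disjoint_left.mp hd (mem_inter.mp hx).2 (hXZ (mem_sdiff.mpr ⟨(mem_inter.mp hx).1, hxZ⟩))

lemma restrict_mul_apply_univ [Fintype ι] (V : Finset ι) (f g : SetFun ι B) :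
    (restrict V f * g) univ = ∑ Y ∈ V.powerset, f Y * g Yᶜ := by
  rw [mul_apply, powerset_univ, ← sum_subset (subset_univ V.powerset)]
  · refine sum_congr rfl fun Y hY => ?_
    rw [restrict_apply, if_pos (mem_powerset.mp hY), compl_eq_univ_sdiff]
  · intro Y _ hY
    rw [restrict_apply, if_neg (mt mem_powerset.mpr hY), zero_mul]

lemma mul_restrict_apply_univ [Fintype ι] (V : Finset ι) (f g : SetFun ι B) :
    (f * restrict V g) univ = ∑ Y ∈ V.powerset, f Yᶜ * g Y := by
  rw [mul_apply, powerset_univ, Fintype.sum_bijective compl compl_involutive.bijective _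
    (fun Y => f Yᶜ * restrict V g Y) fun Z => by rw [compl_compl, compl_eq_univ_sdiff],
    ← sum_subset (subset_univ V.powerset)]
  · refine sum_congr rfl fun Y hY => ?_
    rw [restrict_apply, if_pos (mem_powerset.mp hY)]
  · intro Y _ hY
    rw [restrict_apply, if_neg (mt mem_powerset.mpr hY), mul_zero]

end Semiring

section Ring

variable [Ring B]

lemma of_mul_of_opSum (T : Finset ι → B) (hT : T ∅ = 1) : of T * of (opSum T) = 1 := by
  funext X
  rw [mul_apply, one_apply, ← add_sum_erase _ _ (empty_mem_powerset X)]
  split_ifs with hX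
  · subst hX
    simp [hT, opSum_empty]
  · rw [of_apply, hT, one_mul, sdiff_empty, of_apply, opSum_of_ne_empty T hX, filter_ne']
    simp

lemma of_opSum_mul_of (T : Finset ι → B) (hT : T ∅ = 1) : of (opSum T) * of T = 1 := by
  have hS := of_mul_of_opSum (opSum T) (opSum_empty T)
  rwa [← left_inv_eq_right_inv (of_mul_of_opSum T hT) hS] at hS

def unitOf (T : Finset ι → B) (hT : T ∅ = 1) : (SetFun ι B)ˣ :=
  ⟨of T, of (opSum T), of_mul_of_opSum T hT, of_opSum_mul_of T hT⟩

lemma restrict_opSum_union {T : Finset ι → B} (hT : T ∅ = 1) {V W : Finset ι}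
    (hd : Disjoint V W) (hf : ∀ Za ⊆ V, ∀ Zb ⊆ W, T (Za ∪ Zb) = T Za * T Zb) :
    restrict (V ∪ W) (of (opSum T)) = restrict W (of (opSum T)) * restrict V (of (opSum T)) := by
  have h : Units.map (restrict (V ∪ W)) (unitOf T hT) =
      Units.map (restrict V) (unitOf T hT) * Units.map (restrict W) (unitOf T hT) :=
    Units.ext (restrict_union_eq_mul hd (of T) hf)
  have h_inv := congrArg (fun u => ((u⁻¹ : (SetFun ι B)ˣ) : SetFun ι B)) h
  simp only [Units.coe_map_inv, mul_inv_rev, Units.val_mul] at h_inv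
  exact h_inv

end Ring

end SetFun

section Partition

variable {ι : Type*} [DecidableEq ι] [Fintype ι] {m : ι} {P Q : Finset ι}

lemma Finset.union_insert_eq_univ_of_union_eq_erase (hPQ : P ∪ Q = univ.erase m) :
    P ∪ insert m Q = univ := by
  rw [union_insert, hPQ, insert_erase (mem_univ m)]

lemma Finset.disjoint_insert_of_union_eq_erase (hd : Disjoint P Q) (hPQ : P ∪ Q = univ.erase m) :
    Disjoint P (insert m Q) :=
  disjoint_insert_right.mpr ⟨fun h => notMem_erase m univ (hPQ ▸ mem_union_left Q h), hd⟩

lemma Finset.not_univ_subset_insert_of_union_eq_erase (hd : Disjoint P Q)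
    (hPQ : P ∪ Q = univ.erase m) (hP : P ≠ ∅) : ¬univ ⊆ insert m Q := fun h => by
  obtain ⟨p, hp⟩ := nonempty_iff_ne_empty.mpr hP
  exact disjoint_left.mp (disjoint_insert_of_union_eq_erase hd hPQ) hp (h (mem_univ p))

end Partition

section Causal

open SetFun

variable {ι B : Type*} [DecidableEq ι] [Fintype ι] [Ring B]

theorem sum_compl_mul_opSum_of_causal {T : Finset ι → B} (hT : T ∅ = 1) {m : ι}
    {P Q : Finset ι} (hd : Disjoint P Q) (hPQ : P ∪ Q = univ.erase m) (hP : P ≠ ∅)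
    (hf : ∀ Za ⊆ insert m Q, ∀ Zb ⊆ P, T (Za ∪ Zb) = T Za * T Zb) :
    ∑ Y ∈ (univ.erase m).powerset.filter (· ≠ ∅), T Yᶜ * opSum T Y =
      -(T (insert m Q) * T P) := by
  have huniv : insert m Q ∪ P = univ := by
    rw [union_comm, union_insert_eq_univ_of_union_eq_erase hPQ]
  have hT_fac : of T = restrict (insert m Q) (of T) * restrict P (of T) := by
    rw [← restrict_union_eq_mul (disjoint_insert_of_union_eq_erase hd hPQ).symm (of T) hf,
      huniv, restrict_univ]
  have hS_fac : restrict (univ.erase m) (of (opSum T)) =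
      restrict P (of (opSum T)) * restrict Q (of (opSum T)) := by
    rw [← hPQ, union_comm, restrict_opSum_union hT hd.symm fun Za hZa Zb hZb =>
      hf Za (hZa.trans (subset_insert m Q)) Zb hZb]
  have hP_inv : restrict P (of T) * restrict P (of (opSum T)) = 1 := by
    rw [← map_mul, of_mul_of_opSum T hT, map_one]
  have h_zero : (of T * restrict (univ.erase m) (of (opSum T))) univ = 0 := by
    rw [hS_fac, hT_fac, mul_assoc,
      ← mul_assoc (restrict P (of T)) (restrict P (of (opSum T))), hP_inv, one_mul]
    refine restrict_mul_restrict_apply_of_not_subset _ _ ?_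
    rw [union_eq_left.mpr (subset_insert m Q)]
    exact not_univ_subset_insert_of_union_eq_erase hd hPQ hP
  rw [mul_restrict_apply_univ, ← add_sum_erase _ _ (empty_mem_powerset _), ← filter_ne'] at h_zero
  have hT_univ : T univ = T (insert m Q) * T P := huniv ▸ hf _ subset_rfl _ subset_rfl
  simp only [of_apply, compl_empty, opSum_empty, mul_one, hT_univ] at h_zero
  exact eq_neg_of_add_eq_zero_right h_zero

theorem sum_opSum_mul_compl_of_causal {T : Finset ι → B} (hT : T ∅ = 1) {m : ι}
    {P Q : Finset ι} (hd : Disjoint P Q) (hPQ : P ∪ Q = univ.erase m) (hP : P ≠ ∅)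
    (hf : ∀ Za ⊆ P, ∀ Zb ⊆ insert m Q, T (Za ∪ Zb) = T Za * T Zb) :
    ∑ Y ∈ (univ.erase m).powerset.filter (· ≠ ∅), opSum T Y * T Yᶜ =
      -(T P * T (insert m Q)) := by
  have huniv := union_insert_eq_univ_of_union_eq_erase hPQ
  have hT_fac : of T = restrict P (of T) * restrict (insert m Q) (of T) := by
    rw [← restrict_union_eq_mul (disjoint_insert_of_union_eq_erase hd hPQ) (of T) hf,
      huniv, restrict_univ]
  have hS_fac : restrict (univ.erase m) (of (opSum T)) =
      restrict Q (of (opSum T)) * restrict P (of (opSum T)) := by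
    rw [← hPQ, restrict_opSum_union hT hd fun Za hZa Zb hZb =>
      hf Za hZa Zb (hZb.trans (subset_insert m Q))]
  have hP_inv : restrict P (of (opSum T)) * restrict P (of T) = 1 := by
    rw [← map_mul, of_opSum_mul_of T hT, map_one]
  have h_zero : (restrict (univ.erase m) (of (opSum T)) * of T) univ = 0 := by
    rw [hS_fac, hT_fac, mul_assoc,
      ← mul_assoc (restrict P (of (opSum T))) (restrict P (of T)), hP_inv, one_mul]
    refine restrict_mul_restrict_apply_of_not_subset _ _ ?_
    rw [union_eq_right.mpr (subset_insert m Q)]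
    exact not_univ_subset_insert_of_union_eq_erase hd hPQ hP
  rw [restrict_mul_apply_univ, ← add_sum_erase _ _ (empty_mem_powerset _), ← filter_ne'] at h_zero
  have hT_univ : T univ = T P * T (insert m Q) := huniv ▸ hf _ subset_rfl _ subset_rfl
  simp only [of_apply, compl_empty, opSum_empty, one_mul, hT_univ] at h_zero
  exact eq_neg_of_add_eq_zero_right h_zero

end Causal

section DualNumber

open TrivSqZeroExt

variable {ι A : Type*} [DecidableEq ι] [Ring A]

def dualExt (T T' : Finset ι → A) (X : Finset ι) : DualNumber A := inl (T X) + inr (T' X)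

lemma opSum_dualExt (T T' : Finset ι → A) (X : Finset ι) :
    opSum (dualExt T T') X = dualExt (opSum T) (opSumD T T') X := by
  induction X using Finset.strongInduction with
  | H X ih =>
    by_cases hX : X = ∅
    · subst hX
      ext <;> simp [dualExt, opSum_empty, opSumD_empty]
    have h_ih : ∀ Y ∈ X.powerset.filter (· ≠ ∅),
        opSum (dualExt T T') (X \ Y) = dualExt (opSum T) (opSumD T T') (X \ Y) := by
      intro Y hY
      rw [mem_filter, mem_powerset] at hY
      exact ih _ (sdiff_ssubset hY.1 (nonempty_iff_ne_empty.mpr hY.2))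
    rw [opSum_of_ne_empty _ hX, sum_congr rfl fun Y hY => by rw [h_ih Y hY]]
    ext
    · simp only [dualExt, fst_neg, fst_sum, fst_mul, fst_add, fst_inl, fst_inr, add_zero,
        opSum_of_ne_empty _ hX]
    · simp only [dualExt, snd_neg, snd_sum, snd_mul, fst_add, snd_add, fst_inl, fst_inr,
        snd_inl, snd_inr, add_zero, zero_add, smul_eq_mul, MulOpposite.smul_eq_mul_unop,
        MulOpposite.unop_op, opSumD_of_ne_empty _ _ hX, add_comm]

lemma dualExt_union {T T' : Finset ι → A} {Za Zb : Finset ι}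
    (hf : T (Za ∪ Zb) = T Za * T Zb) (hf' : T' (Za ∪ Zb) = T' Za * T Zb + T Za * T' Zb) :
    dualExt T T' (Za ∪ Zb) = dualExt T T' Za * dualExt T T' Zb := by
  ext <;> simp [dualExt, hf, hf', add_comm]

variable [Fintype ι]

lemma advPD_eq_sum (T T' : Finset ι → A) (m : ι) :
    advPD T T' m = ∑ Y ∈ (univ.erase m).powerset.filter (· ≠ ∅),
      (T' Yᶜ * opSum T Y + T Yᶜ * opSumD T T' Y) := by
  refine sum_congr rfl fun Y _ => ?_
  rcases neg_one_pow_eq_or A Y.card with h | h <;> simp [chronoBar, chronoBarD, h, add_comm]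

lemma retPD_eq_sum (T T' : Finset ι → A) (m : ι) :
    retPD T T' m = ∑ Y ∈ (univ.erase m).powerset.filter (· ≠ ∅),
      (opSumD T T' Y * T Yᶜ + opSum T Y * T' Yᶜ) := by
  refine sum_congr rfl fun Y _ => ?_
  rcases neg_one_pow_eq_or A Y.card with h | h <;> simp [chronoBar, chronoBarD, h, add_comm]

theorem advPD_eq_of_causal {T T' : Finset ι → A} (hT : T ∅ = 1) (hT' : T' ∅ = 0) {m : ι}
    {P Q : Finset ι} (hd : Disjoint P Q) (hPQ : P ∪ Q = univ.erase m) (hP : P ≠ ∅)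
    (hf : ∀ Za ⊆ insert m Q, ∀ Zb ⊆ P, T (Za ∪ Zb) = T Za * T Zb)
    (hf' : ∀ Za ⊆ insert m Q, ∀ Zb ⊆ P, T' (Za ∪ Zb) = T' Za * T Zb + T Za * T' Zb) :
    advPD T T' m = -(T' (insert m Q) * T P + T (insert m Q) * T' P) := by
  have h := congrArg snd <| sum_compl_mul_opSum_of_causal (T := dualExt T T')
    (by ext <;> simp [dualExt, hT, hT']) hd hPQ hP fun Za hZa Zb hZb =>
      dualExt_union (hf Za hZa Zb hZb) (hf' Za hZa Zb hZb)
  simp only [snd_sum, snd_neg, snd_mul, opSum_dualExt, dualExt] at h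
  rw [advPD_eq_sum]
  simpa [add_comm] using h

theorem retPD_eq_of_causal {T T' : Finset ι → A} (hT : T ∅ = 1) (hT' : T' ∅ = 0) {m : ι}
    {P Q : Finset ι} (hd : Disjoint P Q) (hPQ : P ∪ Q = univ.erase m) (hP : P ≠ ∅)
    (hf : ∀ Za ⊆ P, ∀ Zb ⊆ insert m Q, T (Za ∪ Zb) = T Za * T Zb)
    (hf' : ∀ Za ⊆ P, ∀ Zb ⊆ insert m Q, T' (Za ∪ Zb) = T' Za * T Zb + T Za * T' Zb) :
    retPD T T' m = -(T' P * T (insert m Q) + T P * T' (insert m Q)) := by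
  have h := congrArg snd <| sum_opSum_mul_compl_of_causal (T := dualExt T T')
    (by ext <;> simp [dualExt, hT, hT']) hd hPQ hP fun Za hZa Zb hZb =>
      dualExt_union (hf Za hZa Zb hZb) (hf' Za hZa Zb hZb)
  simp only [snd_sum, snd_neg, snd_mul, opSum_dualExt, dualExt] at h
  rw [retPD_eq_sum]
  simpa [add_comm] using h

end DualNumber

/-- For a partition `P ⊔ Q = {1,…,n−1}` with `P ≠ ∅` and `Qn := Q ∪ {n}`: if `x(Qn) ≥ x(P)`
then `A′_{n,l} = −[T'_l(Qn)·T(P) + T(Qn)·T'_l(P)]` for every `l`, and if `x(P) ≥ x(Qn)` then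
`R′_{n,l} = −[T'_l(P)·T(Qn) + T(P)·T'_l(Qn)]` for every `l`. -/
theorem advPD_retPD_eq_of_causality {A : Type*} [Ring A] (n : ℕ) (hn : 0 < n)
    (x : Fin n → Fin 4 → ℝ) (T : Finset (Fin n) → A) (hT1 : T ∅ = 1)
    (T' : Fin n → Finset (Fin n) → A) (hT'0 : ∀ l, ∀ X : Finset (Fin n), l ∉ X → T' l X = 0)
    (hcausT : ∀ S₁ S₂ : Finset (Fin n), Disjoint S₁ S₂ →
      (∀ i ∈ S₁, ∀ j ∈ S₂, x i - x j ∉ closure Vminus) → T (S₁ ∪ S₂) = T S₁ * T S₂)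
    (hcausT' : ∀ l, ∀ S₁ S₂ : Finset (Fin n), Disjoint S₁ S₂ →
      (∀ i ∈ S₁, ∀ j ∈ S₂, x i - x j ∉ closure Vminus) →
        T' l (S₁ ∪ S₂) = T' l S₁ * T S₂ + T S₁ * T' l S₂)
    (P Q : Finset (Fin n)) (hd : Disjoint P Q)
    (hPQ : P ∪ Q = Finset.univ.erase ⟨n - 1, by omega⟩) (hP : P ≠ ∅) :
    ((∀ i ∈ insert (⟨n - 1, by omega⟩ : Fin n) Q, ∀ j ∈ P, x i - x j ∉ closure Vminus) →
      ∀ l, advPD T (T' l) ⟨n - 1, by omega⟩ =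
        -(T' l (insert ⟨n - 1, by omega⟩ Q) * T P + T (insert ⟨n - 1, by omega⟩ Q) * T' l P)) ∧
    ((∀ i ∈ P, ∀ j ∈ insert (⟨n - 1, by omega⟩ : Fin n) Q, x i - x j ∉ closure Vminus) →
      ∀ l, retPD T (T' l) ⟨n - 1, by omega⟩ =
        -(T' l P * T (insert ⟨n - 1, by omega⟩ Q) + T P * T' l (insert ⟨n - 1, by omega⟩ Q))) := by
  have hT'_empty : ∀ l, T' l ∅ = 0 := fun l => hT'0 l ∅ (notMem_empty l)
  have hdisj := disjoint_insert_of_union_eq_erase hd hPQ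
  constructor
  · intro hx l
    have hx_sub : ∀ Za ⊆ insert _ Q, ∀ Zb ⊆ P, ∀ i ∈ Za, ∀ j ∈ Zb, x i - x j ∉ closure Vminus :=
      fun Za hZa Zb hZb i hi j hj => hx i (hZa hi) j (hZb hj)
    exact advPD_eq_of_causal hT1 (hT'_empty l) hd hPQ hP
      (fun Za hZa Zb hZb => hcausT Za Zb (hdisj.symm.mono hZa hZb) (hx_sub Za hZa Zb hZb))
      (fun Za hZa Zb hZb => hcausT' l Za Zb (hdisj.symm.mono hZa hZb) (hx_sub Za hZa Zb hZb))
  · intro hx l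
    have hx_sub : ∀ Za ⊆ P, ∀ Zb ⊆ insert _ Q, ∀ i ∈ Za, ∀ j ∈ Zb, x i - x j ∉ closure Vminus :=
      fun Za hZa Zb hZb i hi j hj => hx i (hZa hi) j (hZb hj)
    exact retPD_eq_of_causal hT1 (hT'_empty l) hd hPQ hP
      (fun Za hZa Zb hZb => hcausT Za Zb (hdisj.mono hZa hZb) (hx_sub Za hZa Zb hZb))
      (fun Za hZa Zb hZb => hcausT' l Za Zb (hdisj.mono hZa hZb) (hx_sub Za hZa Zb hZb))
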